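/- arXiv:2401.00584 — 2 statements merged into one kernel-verified Lean document; each statement's English description precedes it below -/
import Mathlib

section
/- Let t₁ and t₂ be semibounded forms on H with representing maps Q₁, Q₂ for t₁ − c, t₂ − c respectively (same constant c). Then t₁ ≤ t₂ (meaning dom t₂ ⊂ dom t₁ and t₁[φ] ≤ t₂[φ] for φ ∈ dom t₂) if and only if Q₁ is contractively dominated by Q₂, i.e., dom Q₂ ⊂ dom Q₁ and ‖Q₁φ‖ ≤ ‖Q₂φ‖ for all φ ∈ dom Q₂. -/
open Filter Topology
open scoped ComplexOrder

noncomputable section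

variable {H K K' : Type*}

/-- Sesquilinear forms with domain `D`: linear in the first argument,
conjugate-linear in the second. -/
abbrev Form [NormedAddCommGroup H] [InnerProductSpace ℂ H] (D : Submodule ℂ H) : Type _ :=
  ↥D →ₗ[ℂ] (↥D →ₛₗ[starRingEnd ℂ] ℂ)

section Defs

variable [NormedAddCommGroup H] [InnerProductSpace ℂ H]
  [NormedAddCommGroup K] [InnerProductSpace ℂ K]
  {D : Submodule ℂ H}

/-- `t[φ,φ] ≥ c‖φ‖²` on the domain (in the complex order, so diagonal values are real). -/
def BddBelowBy (t : Form D) (c : ℝ) : Prop :=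
  ∀ φ : ↥D, (↑(c * ‖(φ : H)‖ ^ 2) : ℂ) ≤ t φ φ

/-- The set of Rayleigh quotients of the form `t`; its infimum is the lower bound `m(t)`. -/
def rayleighSet (t : Form D) : Set ℝ :=
  {r : ℝ | ∃ φ : ↥D, (φ : H) ≠ 0 ∧ r = (t φ φ).re / ‖(φ : H)‖ ^ 2}

/-- `Q` is a representing map for the form `t - c` :
`t[φ,ψ] - c(φ,ψ) = (Qφ,Qψ)` (forms/inner products linear in the first entry). -/
def IsRepMap (t : Form D) (c : ℝ) (Q : ↥D →ₗ[ℂ] K) : Prop :=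
  ∀ φ ψ : ↥D, t φ ψ - (c : ℂ) * (inner ℂ (ψ : H) (φ : H) : ℂ) = (inner ℂ (Q ψ) (Q φ) : ℂ)

/-- The graph of a partially defined operator. -/
def graphOf (Q : ↥D →ₗ[ℂ] K) : Set (H × K) :=
  Set.range fun φ : ↥D => ((φ : H), Q φ)

/-- `Q` is a closed operator. -/
def OpClosed (Q : ↥D →ₗ[ℂ] K) : Prop := IsClosed (graphOf Q)

/-- `Q` is closable: the closure of its graph is again a graph. -/
def OpClosable (Q : ↥D →ₗ[ℂ] K) : Prop :=
  ∀ k : K, ((0 : H), k) ∈ closure (graphOf Q) → k = 0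

/-- `Q` is singular: `ran Q ⊆ mul Q**`, equivalently every `(φ,0)` with `φ ∈ dom Q`
belongs to the closure of the graph. -/
def OpSingular (Q : ↥D →ₗ[ℂ] K) : Prop :=
  ∀ φ : ↥D, ((φ : H), (0 : K)) ∈ closure (graphOf Q)

/-- `φ n →_t x` : convergence in `H` together with `t[φ_n - φ_m] → 0`. -/
def TConv (t : Form D) (φ : ℕ → ↥D) (x : H) : Prop :=
  Tendsto (fun n => (φ n : H)) atTop (nhds x) ∧
    Tendsto (fun p : ℕ × ℕ => t (φ p.1 - φ p.2) (φ p.1 - φ p.2)) (atTop ×ˢ atTop) (nhds 0)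

/-- The form `t` is closable. -/
def FormClosable (t : Form D) : Prop :=
  ∀ φ : ℕ → ↥D, TConv t φ 0 → Tendsto (fun n => t (φ n) (φ n)) atTop (nhds 0)

/-- The form `t` is closed. -/
def FormClosed (t : Form D) : Prop :=
  ∀ (φ : ℕ → ↥D) (x : H), TConv t φ x →
    ∃ hx : x ∈ D, Tendsto (fun n => t (φ n - ⟨x, hx⟩) (φ n - ⟨x, hx⟩)) atTop (nhds 0)

/-- The (nonnegative) form `t` is singular. -/
def FormSingular (t : Form D) : Prop :=
  ∀ ψ : ↥D, ∃ φ : ℕ → ↥D,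
    Tendsto (fun n => (φ n : H)) atTop (nhds (ψ : H)) ∧
      Tendsto (fun n => t (φ n) (φ n)) atTop (nhds 0)

end Defs

section Defs2

variable [NormedAddCommGroup H] [InnerProductSpace ℂ H]

/-- Order on forms: `t₁ ≤ t₂` iff `dom t₂ ⊆ dom t₁` and `t₁[φ] ≤ t₂[φ]` on `dom t₂`. -/
def FormLE {D₁ D₂ : Submodule ℂ H} (t₁ : Form D₁) (t₂ : Form D₂) : Prop :=
  ∃ h : D₂ ≤ D₁, ∀ φ : ↥D₂, t₁ ⟨(φ : H), h φ.2⟩ ⟨(φ : H), h φ.2⟩ ≤ t₂ φ φ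

/-- `s` is an extension of the form `t` (`t ⊂ s`). -/
def FormExtends {D₁ D₂ : Submodule ℂ H} (s : Form D₂) (t : Form D₁) : Prop :=
  ∃ h : D₁ ≤ D₂, ∀ φ ψ : ↥D₁, s ⟨(φ : H), h φ.2⟩ ⟨(ψ : H), h ψ.2⟩ = t φ ψ

/-- `r` is the regular part of `s` : a closable semibounded form below `s`
which dominates every closable semibounded form below `s`. -/
def IsRegularPart {D : Submodule ℂ H} (s r : Form D) : Prop :=
  FormClosable r ∧ (∃ c, BddBelowBy r c) ∧ FormLE r s ∧
    ∀ (Du : Submodule ℂ H) (u : Form Du), FormClosable u → (∃ cu, BddBelowBy u cu) →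
      FormLE u s → FormLE u r

end Defs2

section Rel

variable [NormedAddCommGroup H] [InnerProductSpace ℂ H]
  [NormedAddCommGroup K] [InnerProductSpace ℂ K] {D : Submodule ℂ H}

/-- A symmetric relation in `H`: `⟨φ',ψ⟩ = ⟨φ,ψ'⟩` for all members. -/
def IsSymmRel (R : Set (H × H)) : Prop :=
  ∀ p ∈ R, ∀ q ∈ R, (inner ℂ q.1 p.2 : ℂ) = (inner ℂ q.2 p.1 : ℂ)

/-- The adjoint of a linear relation in `H`. -/
def adjRelSet (R : Set (H × H)) : Set (H × H) :=
  {q | ∀ p ∈ R, (inner ℂ q.1 p.2 : ℂ) = (inner ℂ q.2 p.1 : ℂ)}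

/-- The relation `Q*Q + c` in `H`. -/
def StRel (Q : ↥D →ₗ[ℂ] K) (c : ℝ) : Set (H × H) :=
  {p | ∃ h : p.1 ∈ D, ∀ ψ : ↥D,
    (inner ℂ (Q ψ) (Q ⟨p.1, h⟩) : ℂ) = (inner ℂ (ψ : H) (p.2 - (c : ℂ) • p.1) : ℂ)}

/-- The relation `Q*Q** + c` in `H`, where `Q**` is the closure of the graph of `Q`. -/
def ARel (Q : ↥D →ₗ[ℂ] K) (c : ℝ) : Set (H × H) :=
  {p | ∃ g : K, (p.1, g) ∈ closure (graphOf Q) ∧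
    ∀ ψ : ↥D, (inner ℂ (Q ψ) g : ℂ) = (inner ℂ (ψ : H) (p.2 - (c : ℂ) • p.1) : ℂ)}

end Rel

section RepMap

variable [NormedAddCommGroup H] [InnerProductSpace ℂ H]
  [NormedAddCommGroup K] [InnerProductSpace ℂ K] [NormedAddCommGroup K'] [InnerProductSpace ℂ K']
  {D D₁ D₂ : Submodule ℂ H} {c : ℝ}

theorem IsRepMap.apply_self {t : Form D} {Q : ↥D →ₗ[ℂ] K} (hQ : IsRepMap t c Q) (φ : ↥D) :
    t φ φ = ((c * ‖(φ : H)‖ ^ 2 + ‖Q φ‖ ^ 2 : ℝ) : ℂ) := by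
  have h := hQ φ φ
  rw [inner_self_eq_norm_sq_to_K, inner_self_eq_norm_sq_to_K] at h
  push_cast
  linear_combination h

theorem IsRepMap.apply_self_le_iff {t₁ : Form D₁} {t₂ : Form D₂}
    {Q₁ : ↥D₁ →ₗ[ℂ] K} {Q₂ : ↥D₂ →ₗ[ℂ] K'} (hQ₁ : IsRepMap t₁ c Q₁) (hQ₂ : IsRepMap t₂ c Q₂)
    {φ₁ : ↥D₁} {φ₂ : ↥D₂} (h : (φ₁ : H) = φ₂) :
    t₁ φ₁ φ₁ ≤ t₂ φ₂ φ₂ ↔ ‖Q₁ φ₁‖ ≤ ‖Q₂ φ₂‖ := by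
  rw [hQ₁.apply_self, hQ₂.apply_self, h, Complex.real_le_real, add_le_add_iff_left,
    sq_le_sq₀ (norm_nonneg _) (norm_nonneg _)]

end RepMap

/-- `t₁ ≤ t₂` iff `Q₁` is contractively dominated by `Q₂`
(representing maps for `tᵢ - c`, same constant `c`). -/
theorem statement7 [NormedAddCommGroup H] [InnerProductSpace ℂ H]
    [NormedAddCommGroup K] [InnerProductSpace ℂ K]
    [NormedAddCommGroup K'] [InnerProductSpace ℂ K']
    {D₁ D₂ : Submodule ℂ H} (t₁ : Form D₁) (t₂ : Form D₂) (c : ℝ)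
    (Q₁ : ↥D₁ →ₗ[ℂ] K) (Q₂ : ↥D₂ →ₗ[ℂ] K')
    (hQ₁ : IsRepMap t₁ c Q₁) (hQ₂ : IsRepMap t₂ c Q₂) :
    FormLE t₁ t₂ ↔
      ∃ h : D₂ ≤ D₁, ∀ φ : ↥D₂, ‖Q₁ ⟨(φ : H), h φ.2⟩‖ ≤ ‖Q₂ φ‖ :=
  exists_congr fun _ => forall_congr' fun _ => hQ₁.apply_self_le_iff hQ₂ rfl
end
end

section
/- Let t be a semibounded form on H, c ≤ m(t), and Q_c a representing map for t − c. Then the relation A = Q_c*Q_c** + c is selfadjoint and bounded below by m(t), and for each (φ, φ') ∈ A there exists a sequence φ_n ∈ dom t with φ_n → φ in H, t[φ_n − φ_m] → 0, and t[φ_n, ψ] → ⟨φ', ψ⟩ for all ψ ∈ dom t. Conversely, any selfadjoint relation H₀ such that each (φ,φ') ∈ H₀ admits such an approximating sequence satisfies H₀ = A. -/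
open Filter Topology
open scoped ComplexOrder

noncomputable section

variable {H K K' : Type*}

/-!
For `(φ, φ') ∈ A = Q*Q** + c`, witnessed by `(φ, g)` in the closed graph of `Q`, one has
`⟨x, φ'⟩ = ⟨k, g⟩ + c⟨x, φ⟩` for every `(x, k)` in the closed graph. Hence `A` is symmetric, and
`⟨φ, φ'⟩ = ‖g‖² + c‖φ‖² ≥ m‖φ‖²` because `(m - c)‖ψ‖² ≤ ‖Qψ‖²` on `dom t` passes to the closed
graph. Projecting `(u, 0)` onto the closed graph in `H ⊕ K` shows that `A + (1 - c)` is onto, so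
`A` is selfadjoint.

Since `t[χ] = ‖Qχ‖² + c‖χ‖²`, `φ_n →_t φ` says exactly that `(φ_n, Qφ_n)` converges to some
`(φ, g)` in the closed graph, and then `t[φ_n, ψ] → ⟨Qψ, g⟩ + c⟨ψ, φ⟩`, which is `⟨ψ, φ'⟩` for all
`ψ` iff `(φ, φ') ∈ A`. So a selfadjoint `H₀` with approximating sequences satisfies `H₀ ⊆ A`,
whence `A = A* ⊆ H₀* = H₀`.
-/

open scoped InnerProductSpace

theorem inner_self_eq_ofReal_norm_sq {E : Type*} [NormedAddCommGroup E]
    [InnerProductSpace ℂ E] (x : E) : ⟪x, x⟫_ℂ = ((‖x‖ ^ 2 : ℝ) : ℂ) := by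
  rw [inner_self_eq_norm_sq_to_K]
  norm_cast

section Graph

variable [NormedAddCommGroup H] [InnerProductSpace ℂ H]
  [NormedAddCommGroup K] [InnerProductSpace ℂ K] {D : Submodule ℂ H} {Q : ↥D →ₗ[ℂ] K}

theorem mem_closure_graphOf_iff {x : H} {k : K} :
    (x, k) ∈ closure (graphOf Q) ↔ ∃ φ : ℕ → ↥D,
      Tendsto (fun n => (φ n : H)) atTop (𝓝 x) ∧ Tendsto (fun n => Q (φ n)) atTop (𝓝 k) := by
  rw [mem_closure_iff_seq_limit]
  constructor
  · rintro ⟨u, hu, hlim⟩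
    choose φ hφ using hu
    obtain rfl : (fun n => ((φ n : H), Q (φ n))) = u := funext hφ
    exact ⟨φ, (continuous_fst.tendsto _).comp hlim, (continuous_snd.tendsto _).comp hlim⟩
  · rintro ⟨φ, hx, hk⟩
    exact ⟨_, fun n => ⟨φ n, rfl⟩, hx.prodMk_nhds hk⟩

theorem inner_eq_of_mem_closure_graphOf {g : K} {h : H}
    (hg : ∀ ψ : ↥D, ⟪Q ψ, g⟫_ℂ = ⟪(ψ : H), h⟫_ℂ) {x : H} {k : K}
    (hxk : (x, k) ∈ closure (graphOf Q)) : ⟪k, g⟫_ℂ = ⟪x, h⟫_ℂ := by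
  have hclosed : IsClosed {p : H × K | ⟪p.2, g⟫_ℂ = ⟪p.1, h⟫_ℂ} :=
    isClosed_eq (continuous_snd.inner continuous_const) (continuous_fst.inner continuous_const)
  refine closure_minimal ?_ hclosed hxk
  rintro _ ⟨ψ, rfl⟩
  exact hg ψ

theorem mul_norm_sq_le_of_mem_closure_graphOf {a : ℝ}
    (ha : ∀ ψ : ↥D, a * ‖(ψ : H)‖ ^ 2 ≤ ‖Q ψ‖ ^ 2) {x : H} {k : K}
    (hxk : (x, k) ∈ closure (graphOf Q)) : a * ‖x‖ ^ 2 ≤ ‖k‖ ^ 2 := by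
  have hclosed : IsClosed {p : H × K | a * ‖p.1‖ ^ 2 ≤ ‖p.2‖ ^ 2} :=
    isClosed_le (by fun_prop) (by fun_prop)
  refine closure_minimal ?_ hclosed hxk
  rintro _ ⟨ψ, rfl⟩
  exact ha ψ

/-- The remainder `(u - x, -k)` of the orthogonal projection of `(u, 0)` onto the closed graph is
orthogonal to the graph of `Q`, which says `Q* k = u - x`. -/
theorem exists_mem_closure_graphOf_inner_eq [CompleteSpace H] [CompleteSpace K] (u : H) :
    ∃ (x : H) (k : K), (x, k) ∈ closure (graphOf Q) ∧
      ∀ ψ : ↥D, ⟪Q ψ, k⟫_ℂ = ⟪(ψ : H), u - x⟫_ℂ := by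
  let e := WithLp.prodContinuousLinearEquiv 2 ℂ H K
  let G : Submodule ℂ (WithLp 2 (H × K)) :=
    (LinearMap.range (D.subtype.prod Q)).comap (e : WithLp 2 (H × K) →ₗ[ℂ] H × K)
  have hG : (G : Set (WithLp 2 (H × K))) = e ⁻¹' graphOf Q := rfl
  have hGc : (G.topologicalClosure : Set (WithLp 2 (H × K))) = e ⁻¹' closure (graphOf Q) := by
    rw [Submodule.topologicalClosure_coe, hG]
    exact (e.toHomeomorph.preimage_closure _).symm
  have : CompleteSpace G.topologicalClosure :=
    G.isClosed_topologicalClosure.completeSpace_coe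
  obtain ⟨y, hy, z, hz, hyz⟩ :=
    G.topologicalClosure.exists_add_mem_mem_orthogonal (e.symm (u, 0))
  have hz₁ : z.fst = u - y.fst := eq_sub_of_add_eq' (congrArg WithLp.fst hyz).symm
  have hz₂ : z.snd = -y.snd := eq_neg_of_add_eq_zero_right (congrArg WithLp.snd hyz).symm
  refine ⟨y.fst, y.snd, (Set.ext_iff.1 hGc y).1 hy, fun ψ => ?_⟩
  have hψ : e.symm ((ψ : H), Q ψ) ∈ G.topologicalClosure :=
    G.le_topologicalClosure ⟨ψ, (e.apply_symm_apply _).symm⟩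
  have h0 := (Submodule.mem_orthogonal _ _).1 hz _ hψ
  rw [WithLp.prod_inner_apply] at h0
  change ⟪(ψ : H), z.fst⟫_ℂ + ⟪Q ψ, z.snd⟫_ℂ = 0 at h0
  rw [hz₁, hz₂, inner_neg_right] at h0
  linear_combination -h0

end Graph

section Relation

variable [NormedAddCommGroup H] [InnerProductSpace ℂ H] {R S : Set (H × H)}

theorem subset_adjRelSet_of_isSymmRel (hR : IsSymmRel R) : R ⊆ adjRelSet R :=
  fun q hq p hp => hR p hp q hq

theorem adjRelSet_anti (h : R ⊆ S) : adjRelSet S ⊆ adjRelSet R :=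
  fun _ hq p hp => hq p (h hp)

theorem eq_adjRelSet_of_isSymmRel (hR : IsSymmRel R) (μ : ℝ)
    (hran : ∀ w : H, ∃ p ∈ R, p.2 + (μ : ℂ) • p.1 = w) : R = adjRelSet R := by
  refine (subset_adjRelSet_of_isSymmRel hR).antisymm ?_
  rintro ⟨u, v⟩ huv
  obtain ⟨⟨a, a'⟩, ha, haw⟩ := hran (v + (μ : ℂ) • u)
  have pairing : ∀ q ∈ adjRelSet R, ∀ p ∈ R,
      ⟪q.1, p.2 + (μ : ℂ) • p.1⟫_ℂ = ⟪q.2 + (μ : ℂ) • q.1, p.1⟫_ℂ := by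
    intro q hq p hp
    rw [inner_add_right, inner_add_left, inner_smul_right, inner_smul_left, Complex.conj_ofReal,
      hq p hp]
  have hua : u = a := ext_inner_right ℂ fun z => by
    obtain ⟨p, hp, rfl⟩ := hran z
    rw [pairing _ huv p hp, pairing _ (subset_adjRelSet_of_isSymmRel hR ha) p hp, haw]
  subst hua
  obtain rfl : a' = v := (add_left_inj _).1 haw
  exact ha

theorem eq_of_subset_of_eq_adjRelSet (hR : R = adjRelSet R) (hS : S = adjRelSet S)
    (h : R ⊆ S) : R = S :=
  h.antisymm (by rw [hS, hR]; exact adjRelSet_anti h)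

end Relation

section Rayleigh

variable [NormedAddCommGroup H] [InnerProductSpace ℂ H] {D : Submodule ℂ H} {t : Form D}

theorem mul_norm_sq_le_re_apply_self {m : ℝ} (hm : m ∈ lowerBounds (rayleighSet t))
    (φ : ↥D) : m * ‖(φ : H)‖ ^ 2 ≤ (t φ φ).re := by
  by_cases hφ : (φ : H) = 0
  · obtain rfl : φ = 0 := Subtype.ext hφ
    simp
  · have hpos : 0 < ‖(φ : H)‖ ^ 2 := by positivity
    exact (le_div_iff₀ hpos).1 (hm ⟨φ, hφ, rfl⟩)

end Rayleigh

namespace IsRepMap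

variable [NormedAddCommGroup H] [InnerProductSpace ℂ H]
  [NormedAddCommGroup K] [InnerProductSpace ℂ K] {D : Submodule ℂ H}
  {t : Form D} {c : ℝ} {Q : ↥D →ₗ[ℂ] K}

theorem apply_eq (hQ : IsRepMap t c Q) (φ ψ : ↥D) :
    t φ ψ = ⟪Q ψ, Q φ⟫_ℂ + c * ⟪(ψ : H), φ⟫_ℂ := by
  rw [← hQ φ ψ, sub_add_cancel]

theorem apply_self_s17 (hQ : IsRepMap t c Q) (χ : ↥D) :
    t χ χ = ((‖Q χ‖ ^ 2 + c * ‖(χ : H)‖ ^ 2 : ℝ) : ℂ) := by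
  rw [hQ.apply_eq, inner_self_eq_ofReal_norm_sq, inner_self_eq_ofReal_norm_sq]
  push_cast
  ring

theorem tendsto_apply_self_zero_iff (hQ : IsRepMap t c Q) {ι : Type*} {l : Filter ι}
    {χ : ι → ↥D} (hχ : Tendsto (fun i => (χ i : H)) l (𝓝 0)) :
    Tendsto (fun i => t (χ i) (χ i)) l (𝓝 0) ↔ Tendsto (fun i => Q (χ i)) l (𝓝 0) := by
  have hχ₂ : Tendsto (fun i => c * ‖(χ i : H)‖ ^ 2) l (𝓝 0) := by
    simpa using (hχ.norm.pow 2).const_mul c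
  simp only [hQ.apply_self_s17]
  rw [← Complex.ofReal_zero, Filter.tendsto_ofReal_iff,
    tendsto_zero_iff_norm_tendsto_zero (f := fun i => Q (χ i))]
  constructor
  · intro h
    have hQ₂ : Tendsto (fun i => ‖Q (χ i)‖ ^ 2) l (𝓝 0) := by simpa using h.sub hχ₂
    simpa [Real.sqrt_sq (norm_nonneg _)] using hQ₂.sqrt
  · intro h
    simpa using (h.pow 2).add hχ₂

theorem tConv_iff (hQ : IsRepMap t c Q) {φ : ℕ → ↥D} {x : H} :
    TConv t φ x ↔
      Tendsto (fun n => (φ n : H)) atTop (𝓝 x) ∧ CauchySeq (fun n => Q (φ n)) := by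
  refine and_congr_right fun hx => ?_
  have hdiff :
      Tendsto (fun q : ℕ × ℕ => ((φ q.1 - φ q.2 : ↥D) : H)) (atTop ×ˢ atTop) (𝓝 0) := by
    simpa using (hx.comp tendsto_fst).sub (hx.comp tendsto_snd)
  rw [hQ.tendsto_apply_self_zero_iff hdiff, cauchySeq_iff_tendsto_dist_atTop_0,
    ← prod_atTop_atTop_eq, tendsto_zero_iff_norm_tendsto_zero]
  simp only [map_sub, dist_eq_norm]

theorem tendsto_apply (hQ : IsRepMap t c Q) {ι : Type*} {l : Filter ι} {φ : ι → ↥D}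
    {x : H} {k : K} (hx : Tendsto (fun i => (φ i : H)) l (𝓝 x))
    (hk : Tendsto (fun i => Q (φ i)) l (𝓝 k)) (ψ : ↥D) :
    Tendsto (fun i => t (φ i) ψ) l (𝓝 (⟪Q ψ, k⟫_ℂ + c * ⟪(ψ : H), x⟫_ℂ)) := by
  simp_rw [hQ.apply_eq]
  exact (tendsto_const_nhds.inner hk).add ((tendsto_const_nhds.inner hx).const_mul _)

theorem sub_mul_norm_sq_le (hQ : IsRepMap t c Q) {m : ℝ}
    (hm : m ∈ lowerBounds (rayleighSet t)) (φ : ↥D) : (m - c) * ‖(φ : H)‖ ^ 2 ≤ ‖Q φ‖ ^ 2 := by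
  have h := mul_norm_sq_le_re_apply_self hm φ
  rw [hQ.apply_self_s17, Complex.ofReal_re] at h
  linarith

end IsRepMap

section ARel

variable [NormedAddCommGroup H] [InnerProductSpace ℂ H]
  [NormedAddCommGroup K] [InnerProductSpace ℂ K] {D : Submodule ℂ H}
  {t : Form D} {c : ℝ} {Q : ↥D →ₗ[ℂ] K}

theorem mem_ARel_iff {p : H × H} :
    p ∈ ARel Q c ↔ ∃ g : K, (p.1, g) ∈ closure (graphOf Q) ∧
      ∀ ψ : ↥D, ⟪Q ψ, g⟫_ℂ + c * ⟪(ψ : H), p.1⟫_ℂ = ⟪(ψ : H), p.2⟫_ℂ := by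
  simp only [ARel, Set.mem_ofPred_eq, inner_sub_right, inner_smul_right, eq_sub_iff_add_eq]

theorem inner_eq_of_mem_ARel {p : H × H} {g : K}
    (hg : ∀ ψ : ↥D, ⟪Q ψ, g⟫_ℂ = ⟪(ψ : H), p.2 - (c : ℂ) • p.1⟫_ℂ) {x : H} {k : K}
    (hxk : (x, k) ∈ closure (graphOf Q)) : ⟪x, p.2⟫_ℂ = ⟪k, g⟫_ℂ + c * ⟪x, p.1⟫_ℂ := by
  rw [inner_eq_of_mem_closure_graphOf hg hxk, inner_sub_right, inner_smul_right,
    sub_add_cancel]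

theorem isSymmRel_ARel : IsSymmRel (ARel Q c) := by
  rintro p ⟨g₁, hp, hg₁⟩ q ⟨g₂, hq, hg₂⟩
  rw [inner_eq_of_mem_ARel hg₁ hq, ← inner_conj_symm q.2, inner_eq_of_mem_ARel hg₂ hp,
    map_add, map_mul, inner_conj_symm, inner_conj_symm, Complex.conj_ofReal]

theorem exists_mem_ARel_add_smul_eq [CompleteSpace H] [CompleteSpace K] (w : H) :
    ∃ p ∈ ARel Q c, p.2 + ((1 - c : ℝ) : ℂ) • p.1 = w := by
  obtain ⟨x, k, hxk, hk⟩ := exists_mem_closure_graphOf_inner_eq (Q := Q) w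
  refine ⟨(x, w - ((1 - c : ℝ) : ℂ) • x), ⟨k, hxk, fun ψ => ?_⟩, sub_add_cancel _ _⟩
  rw [hk ψ]
  congr 1
  push_cast
  module

theorem ARel_eq_adjRelSet [CompleteSpace H] [CompleteSpace K] :
    ARel Q c = adjRelSet (ARel Q c) :=
  eq_adjRelSet_of_isSymmRel isSymmRel_ARel (1 - c) exists_mem_ARel_add_smul_eq

theorem ofReal_mul_norm_sq_le_inner_of_mem_ARel (hQ : IsRepMap t c Q) {m : ℝ}
    (hm : m ∈ lowerBounds (rayleighSet t)) {p : H × H} (hp : p ∈ ARel Q c) :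
    ((m * ‖p.1‖ ^ 2 : ℝ) : ℂ) ≤ ⟪p.1, p.2⟫_ℂ := by
  obtain ⟨g, hpg, hg⟩ := hp
  have hnorm := mul_norm_sq_le_of_mem_closure_graphOf (hQ.sub_mul_norm_sq_le hm) hpg
  rw [inner_eq_of_mem_ARel hg hpg, inner_self_eq_ofReal_norm_sq,
    inner_self_eq_ofReal_norm_sq]
  exact_mod_cast (by linarith : m * ‖p.1‖ ^ 2 ≤ ‖g‖ ^ 2 + c * ‖p.1‖ ^ 2)

theorem exists_tConv_of_mem_ARel (hQ : IsRepMap t c Q) {p : H × H} (hp : p ∈ ARel Q c) :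
    ∃ φ : ℕ → ↥D, TConv t φ p.1 ∧
      ∀ ψ : ↥D, Tendsto (fun n => t (φ n) ψ) atTop (𝓝 ⟪(ψ : H), p.2⟫_ℂ) := by
  obtain ⟨g, hpg, hg⟩ := mem_ARel_iff.1 hp
  obtain ⟨φ, hx, hk⟩ := mem_closure_graphOf_iff.1 hpg
  exact ⟨φ, hQ.tConv_iff.2 ⟨hx, hk.cauchySeq⟩, fun ψ => hg ψ ▸ hQ.tendsto_apply hx hk ψ⟩

theorem mem_ARel_of_tConv [CompleteSpace K] (hQ : IsRepMap t c Q) {p : H × H} {φ : ℕ → ↥D}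
    (hφ : TConv t φ p.1)
    (hlim : ∀ ψ : ↥D, Tendsto (fun n => t (φ n) ψ) atTop (𝓝 ⟪(ψ : H), p.2⟫_ℂ)) :
    p ∈ ARel Q c := by
  obtain ⟨hx, hcauchy⟩ := hQ.tConv_iff.1 hφ
  obtain ⟨g, hg⟩ := cauchySeq_tendsto_of_complete hcauchy
  exact mem_ARel_iff.2 ⟨g, mem_closure_graphOf_iff.2 ⟨φ, hx, hg⟩,
    fun ψ => tendsto_nhds_unique (hQ.tendsto_apply hx hg ψ) (hlim ψ)⟩

end ARel

theorem statement17_general [NormedAddCommGroup H] [InnerProductSpace ℂ H] [CompleteSpace H]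
    [NormedAddCommGroup K] [InnerProductSpace ℂ K] [CompleteSpace K]
    {D : Submodule ℂ H} (t : Form D) (m c : ℝ)
    (hm : IsGLB (rayleighSet t) m)
    (Q : ↥D →ₗ[ℂ] K) (hQ : IsRepMap t c Q) :
    ARel Q c = adjRelSet (ARel Q c) ∧
      (∀ p ∈ ARel Q c, (↑(m * ‖p.1‖ ^ 2) : ℂ) ≤ (inner ℂ p.1 p.2 : ℂ)) ∧
      (∀ p ∈ ARel Q c, ∃ φn : ℕ → ↥D,
        Tendsto (fun n => (φn n : H)) atTop (nhds p.1) ∧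
        Tendsto (fun q : ℕ × ℕ => t (φn q.1 - φn q.2) (φn q.1 - φn q.2))
          (atTop ×ˢ atTop) (nhds 0) ∧
        ∀ ψ : ↥D, Tendsto (fun n => t (φn n) ψ) atTop
          (nhds (inner ℂ (ψ : H) p.2 : ℂ))) ∧
      (∀ R : Set (H × H), R = adjRelSet R →
        (∀ p ∈ R, ∃ φn : ℕ → ↥D,
          Tendsto (fun n => (φn n : H)) atTop (nhds p.1) ∧
          Tendsto (fun q : ℕ × ℕ => t (φn q.1 - φn q.2) (φn q.1 - φn q.2))
            (atTop ×ˢ atTop) (nhds 0) ∧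
          ∀ ψ : ↥D, Tendsto (fun n => t (φn n) ψ) atTop
            (nhds (inner ℂ (ψ : H) p.2 : ℂ))) →
        R = ARel Q c) := by
  have hA : ARel Q c = adjRelSet (ARel Q c) := ARel_eq_adjRelSet
  refine ⟨hA, fun p hp => ofReal_mul_norm_sq_le_inner_of_mem_ARel hQ hm.1 hp,
    fun p hp => ?_, fun R hR hRapprox => ?_⟩
  · obtain ⟨φ, ⟨hx, hcauchy⟩, hlim⟩ := exists_tConv_of_mem_ARel hQ hp
    exact ⟨φ, hx, hcauchy, hlim⟩
  · refine eq_of_subset_of_eq_adjRelSet hR hA fun p hp => ?_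
    obtain ⟨φ, hx, hcauchy, hlim⟩ := hRapprox p hp
    exact mem_ARel_of_tConv hQ ⟨hx, hcauchy⟩ hlim

/-- the relation `A = Q*Q** + c` is selfadjoint, bounded below by `m(t)`,
every element of `A` is represented by `t` in the limit sense, and `A` is the unique
selfadjoint relation with this property. -/
theorem statement17 [NormedAddCommGroup H] [InnerProductSpace ℂ H] [CompleteSpace H]
    [NormedAddCommGroup K] [InnerProductSpace ℂ K] [CompleteSpace K]
    {D : Submodule ℂ H} (t : Form D) (m c : ℝ)
    (hm : IsGLB (rayleighSet t) m) (hc : c ≤ m)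
    (Q : ↥D →ₗ[ℂ] K) (hQ : IsRepMap t c Q) :
    ARel Q c = adjRelSet (ARel Q c) ∧
      (∀ p ∈ ARel Q c, (↑(m * ‖p.1‖ ^ 2) : ℂ) ≤ (inner ℂ p.1 p.2 : ℂ)) ∧
      (∀ p ∈ ARel Q c, ∃ φn : ℕ → ↥D,
        Tendsto (fun n => (φn n : H)) atTop (nhds p.1) ∧
        Tendsto (fun q : ℕ × ℕ => t (φn q.1 - φn q.2) (φn q.1 - φn q.2))
          (atTop ×ˢ atTop) (nhds 0) ∧
        ∀ ψ : ↥D, Tendsto (fun n => t (φn n) ψ) atTop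
          (nhds (inner ℂ (ψ : H) p.2 : ℂ))) ∧
      (∀ R : Set (H × H), R = adjRelSet R →
        (∀ p ∈ R, ∃ φn : ℕ → ↥D,
          Tendsto (fun n => (φn n : H)) atTop (nhds p.1) ∧
          Tendsto (fun q : ℕ × ℕ => t (φn q.1 - φn q.2) (φn q.1 - φn q.2))
            (atTop ×ˢ atTop) (nhds 0) ∧
          ∀ ψ : ↥D, Tendsto (fun n => t (φn n) ψ) atTop
            (nhds (inner ℂ (ψ : H) p.2 : ℂ))) →
        R = ARel Q c) :=
  statement17_general t m c hm Q hQ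
end
end
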